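/- Let m ≥ 2 and 1 ≤ pᵢ ≤ qᵢ < ∞ for i = 1, …, m. Set 1/p* := Σ_{i=1}^m 1/pᵢ and 1/q := Σ_{i=1}^m 1/qᵢ, and assume 1 ≤ p* ≤ q < ∞. Then for all measurable functions fᵢ ∈ w𝓜^{pᵢ}_{qᵢ}(ℝⁿ), i = 1, …, m, one has ‖∏_{i=1}^m fᵢ‖_{w𝓜^{p*}_q} ≤ ∏_{i=1}^m (pᵢ/p*)^{1/pᵢ} · ∏_{i=1}^m ‖fᵢ‖_{w𝓜^{pᵢ}_{qᵢ}}. -/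

import Mathlib

/-!
On a fixed ball `B`, if `∏ tᵢ = γ` then `{|∏ fᵢ| > γ} ⊆ ⋃ᵢ {|fᵢ| > tᵢ}`, and Chebyshev bounds
the `i`-th set by `(‖fᵢ‖ / tᵢ) ^ pᵢ`, where `‖·‖` is the weak `L^{pᵢ}(B)` quasinorm. Choosing the
`tᵢ` so that these bounds are proportional to `1 / pᵢ` gives the weak Hölder inequality on `B`
with constant `∏ (pᵢ / p*) ^ (1 / pᵢ)`. The Morrey weights then factor, since
`1/q - 1/p* = ∑ (1/qᵢ - 1/pᵢ)`.
-/
open MeasureTheory ENNReal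

/-- The weak Lebesgue `L^{p,∞}(B)` quasinorm of `f` on a set `B ⊆ ℝⁿ`:
`sup_{γ>0} γ · |{x ∈ B : |f x| > γ}|^{1/p}`. -/
noncomputable def weakLpNorm {n : ℕ} (p : ℝ) (B : Set (Fin n → ℝ))
    (f : (Fin n → ℝ) → ℝ) : ℝ≥0∞ :=
  ⨆ γ : Set.Ioi (0 : ℝ),
    ENNReal.ofReal γ.1 * (volume {x ∈ B | γ.1 < |f x|}) ^ (1 / p)

/-- The weak Morrey `w𝓜^p_q(ℝⁿ)` quasinorm of `f`:
`sup_{B = B(a,r), γ>0} |B|^{1/q - 1/p} · γ · |{x ∈ B : |f x| > γ}|^{1/p}`. -/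
noncomputable def weakMorreyNorm {n : ℕ} (p q : ℝ) (f : (Fin n → ℝ) → ℝ) : ℝ≥0∞ :=
  ⨆ (a : Fin n → ℝ) (r : Set.Ioi (0 : ℝ)),
    (volume (Metric.ball a r.1)) ^ (1 / q - 1 / p) * weakLpNorm p (Metric.ball a r.1) f

lemma ENNReal.rpow_sum_of_ne_zero_of_ne_top {ι : Type*} {x : ℝ≥0∞} (hx₀ : x ≠ 0) (hx : x ≠ ∞)
    (s : Finset ι) (e : ι → ℝ) : x ^ (∑ i ∈ s, e i) = ∏ i ∈ s, x ^ e i := by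
  induction s using Finset.cons_induction with
  | empty => simp
  | cons a s ha ih => rw [Finset.sum_cons, Finset.prod_cons, ENNReal.rpow_add _ _ hx₀ hx, ih]

lemma exists_prod_eq_sum_rpow_eq {ι : Type*} [Fintype ι] {P : ι → ℝ} (hP : ∀ i, 0 < P i)
    {p : ℝ} (hp : 0 < p) (hsum : 1 / p = ∑ i, 1 / P i) {C : ℝ} (hC : 0 < C) :
    ∃ u : ι → ℝ, (∀ i, 0 < u i) ∧ ∏ i, u i = C ∧
      ∑ i, u i ^ P i = ((∏ i, (P i / p) ^ (1 / P i)) * C) ^ p := by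
  set K := ∏ i, (P i / p) ^ (1 / P i)
  have hK : 0 < K := Finset.prod_pos fun i _ => by have := hP i; positivity
  set S := (K * C) ^ p
  have hS : 0 < S := by positivity
  -- `uᵢ ^ Pᵢ` proportional to `1 / Pᵢ`: the equality case of weighted AM–GM
  refine ⟨fun i => (p / P i * S) ^ (1 / P i), fun i => by have := hP i; positivity, ?_, ?_⟩
  · have hKinv : ∏ i, (p / P i) ^ (1 / P i) = K⁻¹ := by
      rw [← Finset.prod_inv_distrib]
      refine Finset.prod_congr rfl fun i _ => ?_
      rw [← Real.inv_rpow (by have := hP i; positivity), inv_div]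
    have hSroot : S ^ (1 / p) = K * C := by
      rw [← Real.rpow_mul (by positivity), mul_one_div_cancel hp.ne', Real.rpow_one]
    simp only [Real.mul_rpow (div_pos hp (hP _)).le hS.le]
    rw [Finset.prod_mul_distrib, hKinv, ← Real.rpow_sum_of_pos hS, ← hsum, hSroot]
    field_simp
  · calc ∑ i, ((p / P i * S) ^ (1 / P i)) ^ P i = ∑ i, p / P i * S := by
          refine Finset.sum_congr rfl fun i _ => ?_
          rw [← Real.rpow_mul (by have := hP i; positivity), one_div_mul_cancel (hP i).ne',
            Real.rpow_one]
      _ = S := by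
          simp only [← Finset.sum_mul, div_eq_mul_one_div p, ← Finset.mul_sum, ← hsum,
            mul_one_div_cancel hp.ne', one_mul]

lemma setOf_lt_abs_prod_subset {α ι : Type*} [Fintype ι] (B : Set α) (f : ι → α → ℝ)
    (t : ι → ℝ) :
    {x ∈ B | ∏ i, t i < |∏ i, f i x|} ⊆ ⋃ i, {x ∈ B | t i < |f i x|} := by
  rintro x ⟨hxB, hx⟩
  by_contra hnot
  simp only [Set.mem_iUnion, Set.mem_ofPred_eq, not_exists, not_and, not_lt] at hnot
  rw [Finset.abs_prod] at hx
  exact hx.not_ge (Finset.prod_le_prod (fun i _ => abs_nonneg _) fun i _ => hnot i hxB)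

section WeakLp

variable {n : ℕ} {p : ℝ} {B : Set (Fin n → ℝ)} {f : (Fin n → ℝ) → ℝ}

lemma le_weakLpNorm {t : ℝ} (ht : 0 < t) :
    ENNReal.ofReal t * volume {x ∈ B | t < |f x|} ^ (1 / p) ≤ weakLpNorm p B f :=
  le_iSup (fun γ : Set.Ioi (0 : ℝ) =>
    ENNReal.ofReal γ.1 * volume {x ∈ B | γ.1 < |f x|} ^ (1 / p)) ⟨t, ht⟩

lemma volume_lt_abs_le_of_weakLpNorm_le {t u : ℝ} (hp : 0 < p) (ht : 0 < t) (hu : 0 ≤ u)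
    (h : weakLpNorm p B f ≤ ENNReal.ofReal (t * u)) :
    volume {x ∈ B | t < |f x|} ≤ ENNReal.ofReal (u ^ p) := by
  have hcheb : ENNReal.ofReal t * volume {x ∈ B | t < |f x|} ^ (1 / p) ≤
      ENNReal.ofReal t * ENNReal.ofReal u := by
    rw [← ENNReal.ofReal_mul ht.le]
    exact (le_weakLpNorm ht).trans h
  have hroot := (ENNReal.mul_le_mul_iff_right (by simpa using ht) ofReal_ne_top).1 hcheb
  calc volume {x ∈ B | t < |f x|} = (volume {x ∈ B | t < |f x|} ^ (1 / p)) ^ p := by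
        rw [← ENNReal.rpow_mul, one_div_mul_cancel hp.ne', ENNReal.rpow_one]
    _ ≤ ENNReal.ofReal u ^ p := by gcongr
    _ = ENNReal.ofReal (u ^ p) := ENNReal.ofReal_rpow_of_nonneg hu hp.le

lemma weakLpNorm_eq_zero_iff (hp : 0 < p) :
    weakLpNorm p B f = 0 ↔ volume {x ∈ B | 0 < |f x|} = 0 := by
  constructor
  · intro h
    have hlevel : ∀ k : ℕ, volume {x ∈ B | 1 / ((k : ℝ) + 1) < |f x|} = 0 := fun k =>
      nonpos_iff_eq_zero.1 <| by
        simpa [Real.zero_rpow hp.ne'] using volume_lt_abs_le_of_weakLpNorm_le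
          (t := 1 / ((k : ℝ) + 1)) (u := 0) hp (by positivity) le_rfl (by rw [h]; exact zero_le)
    refine measure_mono_null (fun x ⟨hxB, hx⟩ => ?_) (measure_iUnion_null hlevel)
    obtain ⟨k, hk⟩ := exists_nat_one_div_lt hx
    exact Set.mem_iUnion.2 ⟨k, hxB, hk⟩
  · intro h
    refine ENNReal.iSup_eq_zero.2 fun γ => ?_
    have hsub : {x ∈ B | γ.1 < |f x|} ⊆ {x ∈ B | 0 < |f x|} :=
      fun x hx => ⟨hx.1, γ.2.out.trans hx.2⟩
    rw [measure_mono_null hsub h, ENNReal.zero_rpow_of_pos (by positivity), mul_zero]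

variable {ι : Type*} [Fintype ι] {P : ι → ℝ} {g : ι → (Fin n → ℝ) → ℝ}

lemma weakLpNorm_prod_eq_zero (hp : 0 < p) {i : ι} (hPi : 0 < P i)
    (hi : weakLpNorm (P i) B (g i) = 0) : weakLpNorm p B (fun x => ∏ j, g j x) = 0 := by
  have hsub : {x ∈ B | 0 < |∏ j, g j x|} ⊆ {x ∈ B | 0 < |g i x|} := fun x hx =>
    ⟨hx.1, abs_pos.2 fun hzero =>
      (abs_pos.1 hx.2) (Finset.prod_eq_zero (f := fun j => g j x) (Finset.mem_univ i) hzero)⟩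
  rw [weakLpNorm_eq_zero_iff hp]
  exact measure_mono_null hsub ((weakLpNorm_eq_zero_iff hPi).1 hi)

lemma weakLpNorm_prod_le_ofReal (hP : ∀ i, 0 < P i) (hp : 0 < p) (hsum : 1 / p = ∑ i, 1 / P i)
    {c : ι → ℝ} (hc : ∀ i, 0 < c i)
    (hnorm : ∀ i, weakLpNorm (P i) B (g i) = ENNReal.ofReal (c i)) :
    weakLpNorm p B (fun x => ∏ i, g i x) ≤
      ENNReal.ofReal ((∏ i, (P i / p) ^ (1 / P i)) * ∏ i, c i) := by
  refine iSup_le fun ⟨γ, (hγ : 0 < γ)⟩ => ?_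
  set K := ∏ i, (P i / p) ^ (1 / P i)
  have hK : 0 < K := Finset.prod_pos fun i _ => by have := hP i; positivity
  have hcprod : 0 < ∏ i, c i := Finset.prod_pos fun i _ => hc i
  obtain ⟨u, hu, hprod, hsum_u⟩ := exists_prod_eq_sum_rpow_eq hP hp hsum (div_pos hcprod hγ)
  have htprod : ∏ i, c i / u i = γ := by
    rw [Finset.prod_div_distrib, hprod]
    field_simp
  have hvol :
      volume {x ∈ B | γ < |∏ i, g i x|} ≤ ENNReal.ofReal ((K * ((∏ i, c i) / γ)) ^ p) :=
    calc volume {x ∈ B | γ < |∏ i, g i x|}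
        ≤ volume (⋃ i, {x ∈ B | c i / u i < |g i x|}) :=
          measure_mono (htprod ▸ setOf_lt_abs_prod_subset B g _)
      _ ≤ ∑ i, volume {x ∈ B | c i / u i < |g i x|} := measure_iUnion_fintype_le _ _
      _ ≤ ∑ i, ENNReal.ofReal (u i ^ P i) := Finset.sum_le_sum fun i _ =>
          volume_lt_abs_le_of_weakLpNorm_le (hP i) (div_pos (hc i) (hu i)) (hu i).le
            (by rw [hnorm i, div_mul_cancel₀ _ (hu i).ne'])
      _ = ENNReal.ofReal ((K * ((∏ i, c i) / γ)) ^ p) := by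
          rw [← ENNReal.ofReal_sum_of_nonneg fun i _ => by have := hu i; positivity, hsum_u]
  calc ENNReal.ofReal γ * volume {x ∈ B | γ < |∏ i, g i x|} ^ (1 / p)
      ≤ ENNReal.ofReal γ * ENNReal.ofReal ((K * ((∏ i, c i) / γ)) ^ p) ^ (1 / p) := by gcongr
    _ = ENNReal.ofReal (K * ∏ i, c i) := by
        rw [ENNReal.ofReal_rpow_of_nonneg (by positivity) (by positivity),
          ← Real.rpow_mul (by positivity), mul_one_div_cancel hp.ne', Real.rpow_one,
          ← ENNReal.ofReal_mul hγ.le]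
        congr 1
        field_simp

lemma weakLpNorm_prod_le (hP : ∀ i, 0 < P i) (hp : 0 < p) (hsum : 1 / p = ∑ i, 1 / P i) :
    weakLpNorm p B (fun x => ∏ i, g i x) ≤
      (∏ i, ENNReal.ofReal ((P i / p) ^ (1 / P i))) * ∏ i, weakLpNorm (P i) B (g i) := by
  by_cases hzero : ∃ i, weakLpNorm (P i) B (g i) = 0
  · obtain ⟨i, hi⟩ := hzero
    rw [weakLpNorm_prod_eq_zero hp (hP i) hi]
    exact zero_le
  push Not at hzero
  by_cases htop : ∃ i, weakLpNorm (P i) B (g i) = ∞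
  · obtain ⟨i, hi⟩ := htop
    have hconst : ∏ i, ENNReal.ofReal ((P i / p) ^ (1 / P i)) ≠ 0 :=
      Finset.prod_ne_zero_iff.2 fun j _ => by have := hP j; simp; positivity
    have hprod : ∏ j, weakLpNorm (P j) B (g j) = ∞ :=
      WithTop.prod_eq_top (Finset.mem_univ i) hi fun j _ => hzero j
    rw [hprod, ENNReal.mul_top hconst]
    exact le_top
  push Not at htop
  have hc : ∀ i, 0 < (weakLpNorm (P i) B (g i)).toReal := fun i =>
    ENNReal.toReal_pos (hzero i) (htop i)
  calc weakLpNorm p B (fun x => ∏ i, g i x)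
      ≤ ENNReal.ofReal
          ((∏ i, (P i / p) ^ (1 / P i)) * ∏ i, (weakLpNorm (P i) B (g i)).toReal) :=
        weakLpNorm_prod_le_ofReal hP hp hsum hc fun i => (ENNReal.ofReal_toReal (htop i)).symm
    _ = _ := by
        rw [ENNReal.ofReal_mul (Finset.prod_nonneg fun i _ => by have := hP i; positivity),
          ENNReal.ofReal_prod_of_nonneg fun i _ => by have := hP i; positivity,
          ENNReal.ofReal_prod_of_nonneg fun i _ => (hc i).le]
        simp only [ENNReal.ofReal_toReal (htop _)]

lemma le_weakMorreyNorm (q : ℝ) (a : Fin n → ℝ) (r : Set.Ioi (0 : ℝ)) :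
    volume (Metric.ball a r.1) ^ (1 / q - 1 / p) * weakLpNorm p (Metric.ball a r.1) f ≤
      weakMorreyNorm p q f :=
  le_iSup₂ (f := fun (a : Fin n → ℝ) (r : Set.Ioi (0 : ℝ)) =>
    volume (Metric.ball a r.1) ^ (1 / q - 1 / p) * weakLpNorm p (Metric.ball a r.1) f) a r

end WeakLp

theorem holder_weakMorrey_critical_general {n : ℕ} (m : ℕ)
    (P Q : Fin m → ℝ) (hP : ∀ i, 1 ≤ P i)
    (pstar q : ℝ)
    (hpstar : 1 / pstar = ∑ i, 1 / P i)
    (hq : 1 / q = ∑ i, 1 / Q i)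
    (h1p : 1 ≤ pstar)
    (f : Fin m → (Fin n → ℝ) → ℝ) :
    weakMorreyNorm pstar q (fun x => ∏ i, f i x) ≤
      (∏ i, ENNReal.ofReal ((P i / pstar) ^ (1 / P i))) *
        ∏ i, weakMorreyNorm (P i) (Q i) (f i) := by
  refine iSup₂_le fun a r => ?_
  set V := volume (Metric.ball a r.1)
  have hV₀ : V ≠ 0 := (Metric.measure_ball_pos volume a r.2).ne'
  have hV : V ≠ ∞ := measure_ball_lt_top.ne
  have hexp : 1 / q - 1 / pstar = ∑ i, (1 / Q i - 1 / P i) := by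
    rw [hq, hpstar, Finset.sum_sub_distrib]
  calc V ^ (1 / q - 1 / pstar) * weakLpNorm pstar (Metric.ball a r.1) (fun x => ∏ i, f i x)
      ≤ V ^ (1 / q - 1 / pstar) * ((∏ i, ENNReal.ofReal ((P i / pstar) ^ (1 / P i))) *
          ∏ i, weakLpNorm (P i) (Metric.ball a r.1) (f i)) := by
        gcongr
        exact weakLpNorm_prod_le (fun i => by linarith [hP i]) (by linarith) hpstar
    _ = (∏ i, ENNReal.ofReal ((P i / pstar) ^ (1 / P i))) *
          ∏ i, V ^ (1 / Q i - 1 / P i) * weakLpNorm (P i) (Metric.ball a r.1) (f i) := by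
        rw [hexp, ENNReal.rpow_sum_of_ne_zero_of_ne_top hV₀ hV, Finset.prod_mul_distrib]
        ring
    _ ≤ _ := by
        gcongr with i
        exact le_weakMorreyNorm (Q i) a r

/-- Generalized Hölder's inequality in weak Morrey spaces at the critical exponent:
with `1/p* = Σ 1/pᵢ`, `1/q = Σ 1/qᵢ`, and `1 ≤ p* ≤ q < ∞`,
`‖∏ fᵢ‖_{w𝓜^{p*}_q} ≤ ∏ (pᵢ/p*)^{1/pᵢ} ∏ ‖fᵢ‖_{w𝓜^{pᵢ}_{qᵢ}}`. -/
theorem holder_weakMorrey_critical {n : ℕ} (m : ℕ) (hm : 2 ≤ m)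
    (P Q : Fin m → ℝ) (hP : ∀ i, 1 ≤ P i) (hPQ : ∀ i, P i ≤ Q i)
    (pstar q : ℝ)
    (hpstar : 1 / pstar = ∑ i, 1 / P i)
    (hq : 1 / q = ∑ i, 1 / Q i)
    (h1p : 1 ≤ pstar) (hpq : pstar ≤ q)
    (f : Fin m → (Fin n → ℝ) → ℝ) (hf : ∀ i, Measurable (f i))
    (hmem : ∀ i, weakMorreyNorm (P i) (Q i) (f i) < ∞) :
    weakMorreyNorm pstar q (fun x => ∏ i, f i x) ≤
      (∏ i, ENNReal.ofReal ((P i / pstar) ^ (1 / P i))) *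
        ∏ i, weakMorreyNorm (P i) (Q i) (f i) :=
  holder_weakMorrey_critical_general m P Q hP pstar q hpstar hq h1p f
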